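/- Let n, m be natural numbers, let p_m(x) = ∑_{i=0}^{m} x^i/i! over ℚ, and write q_r for the coefficient of x^r in (p_m(x))^n. Then for every r ≥ 1: r · q_r = ∑_{i=1}^{min(m,r)} ((n+1)·i − r) · q_{r−i} / i!. -/

import Mathlib

/-!
Differentiating `P ^ n` gives `P * (P ^ n)' = n * P' * P ^ n`. Applying the Euler operator
`X * d/dX` instead, which multiplies the `r`-th coefficient by `r`, and comparing coefficients of
`X ^ r` yields `∑_{i + j = r} (n * i - j) * P_i * Q_j = 0` for `Q = P ^ n`, i.e. Miller's recurrence
`P_0 * r * Q_r = ∑_{i=1}^{r} ((n + 1) * i - r) * P_i * Q_{r-i}`, valid for every polynomial over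
every commutative ring. For the truncated exponential, `P_0 = 1` and `P_i = 1 / i!` for `i ≤ m`,
while the terms with `i > m` vanish.
-/

open Polynomial Finset

namespace Polynomial

variable {R : Type*}

theorem coeff_X_mul_derivative [Semiring R] (f : R[X]) (r : ℕ) :
    (X * derivative f).coeff r = r * f.coeff r := by
  cases r with
  | zero => simp
  | succ r => rw [coeff_X_mul, coeff_derivative, ← Nat.cast_succ, Nat.cast_comm]

theorem sum_antidiagonal_coeff_mul_coeff_pow [CommRing R] (P : R[X]) (n r : ℕ) :
    ∑ x ∈ antidiagonal r, (((n : R) + 1) * x.1 - r) * P.coeff x.1 * (P ^ n).coeff x.2 = 0 := by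
  have euler : P * (X * derivative (P ^ n)) = C (n : R) * ((X * derivative P) * P ^ n) := by
    rcases n with _ | n
    · simp
    · rw [derivative_pow]; push_cast; ring
  have h : (P * (X * derivative (P ^ n))).coeff r =
      (C (n : R) * ((X * derivative P) * P ^ n)).coeff r := by
    rw [euler]
  rw [coeff_C_mul, coeff_mul, coeff_mul, mul_sum] at h
  rw [← sub_eq_zero.mpr h.symm, ← sum_sub_distrib]
  refine sum_congr rfl fun x hx => ?_
  rw [coeff_X_mul_derivative, coeff_X_mul_derivative, ← (mem_antidiagonal.mp hx)]
  push_cast; ring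

theorem coeff_zero_mul_coeff_pow [CommRing R] (P : R[X]) (n r : ℕ) :
    P.coeff 0 * (r * (P ^ n).coeff r) =
      ∑ i ∈ Icc 1 r, (((n : R) + 1) * i - r) * P.coeff i * (P ^ n).coeff (r - i) := by
  have h := sum_antidiagonal_coeff_mul_coeff_pow P n r
  rw [Nat.sum_antidiagonal_eq_sum_range_succ
      (fun i j => (((n : R) + 1) * i - r) * P.coeff i * (P ^ n).coeff j), Nat.range_succ_eq_Icc_zero,
     ← insert_Icc_add_one_left_eq_Icc r.zero_le, sum_insert (by simp)] at h
  rw [← sub_eq_zero, ← neg_eq_zero, ← h]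
  simp only [Nat.cast_zero, mul_zero, zero_sub, Nat.sub_zero, zero_add]
  ring

theorem coeff_sum_range_inv_factorial_mul_X_pow {K : Type*} [DivisionRing K] (m i : ℕ) :
    (∑ k ∈ range (m + 1), C ((k.factorial : K)⁻¹) * X ^ k).coeff i =
      if i ≤ m then (i.factorial : K)⁻¹ else 0 := by
  simp only [finsetSum_coeff, coeff_C_mul_X_pow, sum_ite_eq, mem_range, Nat.lt_succ_iff]

end Polynomial

theorem miller_recurrence_truncExp_general (n m : ℕ) (r : ℕ) :
    (r : ℚ) * (((∑ k ∈ Finset.range (m + 1),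
          Polynomial.C ((k.factorial : ℚ)⁻¹) * Polynomial.X ^ k) ^ n).coeff r) =
      ∑ i ∈ Finset.Icc 1 (min m r),
        (((n : ℚ) + 1) * (i : ℚ) - (r : ℚ)) *
          (((∑ k ∈ Finset.range (m + 1),
              Polynomial.C ((k.factorial : ℚ)⁻¹) * Polynomial.X ^ k) ^ n).coeff (r - i)) /
          (i.factorial : ℚ) := by
  set P : ℚ[X] := ∑ k ∈ range (m + 1), C ((k.factorial : ℚ)⁻¹) * X ^ k
  have hP (i : ℕ) : P.coeff i = if i ≤ m then (i.factorial : ℚ)⁻¹ else 0 :=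
    coeff_sum_range_inv_factorial_mul_X_pow m i
  have miller := coeff_zero_mul_coeff_pow P n r
  rw [hP, if_pos m.zero_le, Nat.factorial_zero, Nat.cast_one, inv_one, one_mul] at miller
  rw [miller, ← sum_subset (Icc_subset_Icc_right (min_le_right m r))]
  · refine sum_congr rfl fun i hi => ?_
    rw [hP, if_pos ((mem_Icc.mp hi).2.trans (min_le_left m r)), div_eq_mul_inv]
    ring
  · intro i hi hi_min
    have him : ¬ i ≤ m := by simp only [mem_Icc] at hi hi_min; omega
    rw [hP, if_neg him, mul_zero, zero_mul]

/-- The J.C.P. Miller recurrence specialized to the truncated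
exponential: if `q_r` denotes the coefficient of `x^r` in
`(∑_{k=0}^{m} x^k / k!)^n`, then for every `r ≥ 1`,
`r · q_r = ∑_{i=1}^{min(m,r)} ((n+1)·i − r) · q_{r−i} / i!`. -/
theorem miller_recurrence_truncExp (n m : ℕ) (r : ℕ) (hr : 1 ≤ r) :
    (r : ℚ) * (((∑ k ∈ Finset.range (m + 1),
          Polynomial.C ((k.factorial : ℚ)⁻¹) * Polynomial.X ^ k) ^ n).coeff r) =
      ∑ i ∈ Finset.Icc 1 (min m r),
        (((n : ℚ) + 1) * (i : ℚ) - (r : ℚ)) *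
          (((∑ k ∈ Finset.range (m + 1),
              Polynomial.C ((k.factorial : ℚ)⁻¹) * Polynomial.X ^ k) ^ n).coeff (r - i)) /
          (i.factorial : ℚ) :=
  miller_recurrence_truncExp_general n m r
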